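/- Let T be a nonnegative real m×m matrix all of whose eigenvalues have absolute value strictly less than 1. Then there exist a constant γ > 0 and a vector α ∈ ℝ^m with all entries strictly positive and ‖α‖₁ = 1 such that T·α ≤ (1−γ)·α coordinatewise. -/

import Mathlib

/-!
Since every eigenvalue of `T` lies in the open unit disc, Gelfand's formula gives `T ^ k → 0`,
so `T ^ N 𝟙 < 𝟙` for some `N`. The truncated Neumann series `β = ∑_{p<N} T ^ p 𝟙` then satisfies
`T β - β = T ^ N 𝟙 - 𝟙 < 0`, hence `β > T β ≥ 0`. Finitely many strict inequalities
`(T β)ᵢ < βᵢ` leave room for a uniform factor `1 - γ`, and `α` is `β` normalized.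
-/

open Filter Topology Matrix

theorem spectrum.tendsto_pow_atTop_nhds_zero_of_norm_lt_one {A : Type*} [NormedRing A]
    [NormedAlgebra ℂ A] [CompleteSpace A] {a : A} (ha : ∀ z ∈ spectrum ℂ a, ‖z‖ < 1) :
    Tendsto (a ^ ·) atTop (𝓝 0) := by
  rcases subsingleton_or_nontrivial A with hA | hA
  · exact tendsto_const_nhds.congr fun n => Subsingleton.elim _ _
  have hρ : spectralRadius ℂ a < 1 := by
    simpa using spectrum.spectralRadius_lt_of_forall_lt a (r := 1) fun z hz => by
      simpa [← NNReal.coe_lt_coe] using ha z hz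
  obtain ⟨r, hρr, hr1⟩ := ENNReal.lt_iff_exists_nnreal_btwn.1 hρ
  have hr1 : (r : ℝ) < 1 := by exact_mod_cast hr1
  have hle : ∀ᶠ n : ℕ in atTop, ‖a ^ n‖ ≤ (r : ℝ) ^ n := by
    have gelfand := spectrum.pow_nnnorm_pow_one_div_tendsto_nhds_spectralRadius a
    filter_upwards [gelfand.eventually_lt_const hρr, eventually_gt_atTop 0] with n hn hn0
    rw [one_div, ENNReal.rpow_inv_lt_iff (by positivity), ENNReal.rpow_natCast] at hn
    exact_mod_cast hn.le
  exact squeeze_zero_norm' hle (tendsto_pow_atTop_nhds_zero_of_lt_one r.2 hr1)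

theorem exists_pos_forall_le_one_sub_mul_of_forall_lt {ι : Type*} [Finite ι] {u β : ι → ℝ}
    (h : ∀ i, u i < β i) : ∃ γ > 0, ∀ i, u i ≤ (1 - γ) * β i := by
  have hγ : ∀ᶠ γ in 𝓝[>] (0 : ℝ), ∀ i, u i < (1 - γ) * β i := by
    refine eventually_all.2 fun i => ?_
    have hc : Continuous fun γ : ℝ => (1 - γ) * β i := by fun_prop
    have : Tendsto (fun γ : ℝ => (1 - γ) * β i) (𝓝[>] 0) (𝓝 (β i)) := by
      simpa using tendsto_nhdsWithin_of_tendsto_nhds (hc.tendsto 0)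
    exact this.eventually_const_lt (h i)
  obtain ⟨γ, hγu, hγ0⟩ := (hγ.and self_mem_nhdsWithin).exists
  exact ⟨γ, hγ0, fun i => (hγu i).le⟩

namespace Matrix

variable {n : Type*} [Fintype n]

section Convergence

variable [DecidableEq n]

-- Any Banach-algebra norm would do; the `L∞` operator norm induces the product topology.
attribute [local instance] Matrix.linftyOpNormedAddCommGroup Matrix.linftyOpNormedRing
  Matrix.linftyOpNormedAlgebra

theorem tendsto_pow_atTop_nhds_zero_of_isRoot_charpoly_norm_lt_one (T : Matrix n n ℝ)
    (hT : ∀ z : ℂ, (T.charpoly.map (algebraMap ℝ ℂ)).IsRoot z → ‖z‖ < 1) :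
    Tendsto (T ^ ·) atTop (𝓝 0) := by
  have : CompleteSpace (Matrix n n ℂ) := FiniteDimensional.complete ℂ _
  have hA : Tendsto ((T.map (algebraMap ℝ ℂ)) ^ ·) atTop (𝓝 0) :=
    spectrum.tendsto_pow_atTop_nhds_zero_of_norm_lt_one fun z hz => hT z <| by
      rwa [mem_spectrum_iff_isRoot_charpoly, charpoly_map] at hz
  have hre := (continuous_id.matrix_map Complex.continuous_re).tendsto 0 |>.comp hA
  convert hre using 1
  · ext k : 1
    rw [Function.comp_apply, id, ← RingHom.mapMatrix_apply, ← map_pow, RingHom.mapMatrix_apply,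
      map_map]
    exact (map_id' _).symm
  · simp

theorem exists_mulVec_pow_lt_of_tendsto {T : Matrix n n ℝ} (hT : Tendsto (T ^ ·) atTop (𝓝 0))
    {v : n → ℝ} (hv : ∀ i, 0 < v i) : ∃ N, ∀ i, (T ^ N *ᵥ v) i < v i := by
  have hTv : Tendsto (fun k => T ^ k *ᵥ v) atTop (𝓝 0) := by
    simpa [Function.comp_def] using
      ((continuous_id.matrix_mulVec continuous_const).tendsto 0).comp hT
  exact (eventually_all.2 fun i => (tendsto_pi_nhds.1 hTv i).eventually_lt_const (hv i)).exists

end Convergence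

section OrderedRing

variable {R : Type*} [CommRing R] [LinearOrder R] [IsStrictOrderedRing R]

theorem mulVec_nonneg {m : Type*} {A : Matrix m n R} (hA : ∀ i j, 0 ≤ A i j) {v : n → R}
    (hv : 0 ≤ v) : 0 ≤ A *ᵥ v :=
  fun i => Finset.sum_nonneg fun j _ => mul_nonneg (hA i j) (hv j)

theorem exists_pos_mulVec_lt_of_mulVec_pow_lt [DecidableEq n] {T : Matrix n n R}
    (hT : ∀ i j, 0 ≤ T i j) {v : n → R} (hv : 0 ≤ v) {N : ℕ} (hN : ∀ i, (T ^ N *ᵥ v) i < v i) :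
    ∃ β : n → R, (∀ i, 0 < β i) ∧ ∀ i, (T *ᵥ β) i < β i := by
  set β := (∑ p ∈ Finset.range N, T ^ p) *ᵥ v with hβ_def
  have hβ : 0 ≤ β := by
    rw [hβ_def, sum_mulVec]
    exact Finset.sum_nonneg fun p _ => mulVec_nonneg (pow_apply_nonneg hT p) hv
  have hTβ : T *ᵥ β - β = T ^ N *ᵥ v - v := by
    simpa only [sub_mulVec, one_mulVec, ← mulVec_mulVec] using
      congrArg (· *ᵥ v) (mul_geom_sum T N)
  have hlt : ∀ i, (T *ᵥ β) i < β i := fun i => by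
    have := congr_fun hTβ i
    simp only [Pi.sub_apply] at this
    linarith [hN i]
  exact ⟨β, fun i => (mulVec_nonneg hT hβ i).trans_lt (hlt i), hlt⟩

end OrderedRing

theorem exists_sum_abs_eq_one_of_mulVec_le [Nonempty n] {R : Type*} [Field R] [LinearOrder R]
    [IsStrictOrderedRing R] {T : Matrix n n R} {β : n → R} (hβ : ∀ i, 0 < β i) {c : R}
    (h : ∀ i, (T *ᵥ β) i ≤ c * β i) :
    ∃ α : n → R, (∀ i, 0 < α i) ∧ ∑ i, |α i| = 1 ∧ ∀ i, (T *ᵥ α) i ≤ c * α i := by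
  have hS : 0 < ∑ i, β i := Finset.sum_pos (fun i _ => hβ i) Finset.univ_nonempty
  refine ⟨(∑ i, β i)⁻¹ • β, fun i => mul_pos (inv_pos.2 hS) (hβ i), ?_, fun i => ?_⟩
  · simp only [Pi.smul_apply, smul_eq_mul, abs_mul, abs_of_pos (inv_pos.2 hS), abs_of_pos (hβ _),
      ← Finset.mul_sum, inv_mul_cancel₀ hS.ne']
  · rw [mulVec_smul, Pi.smul_apply, Pi.smul_apply, smul_eq_mul, smul_eq_mul, mul_left_comm]
    exact mul_le_mul_of_nonneg_left (h i) (inv_pos.2 hS).le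

end Matrix

/-- A nonnegative real matrix all of whose complex eigenvalues have modulus `< 1`
admits a strictly positive vector `α` with `‖α‖₁ = 1` and `T·α ≤ (1−γ)·α`
coordinatewise, for some `γ > 0`. -/
theorem stmt6 {m : ℕ} (hm : 0 < m) (T : Matrix (Fin m) (Fin m) ℝ)
    (hT : ∀ i j, 0 ≤ T i j)
    (heig : ∀ z : ℂ, (T.charpoly.map (algebraMap ℝ ℂ)).IsRoot z → ‖z‖ < 1) :
    ∃ γ : ℝ, 0 < γ ∧ ∃ α : Fin m → ℝ, (∀ i, 0 < α i) ∧ (∑ i, |α i|) = 1 ∧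
      ∀ i, T.mulVec α i ≤ (1 - γ) * α i := by
  have : Nonempty (Fin m) := ⟨⟨0, hm⟩⟩
  obtain ⟨N, hN⟩ := exists_mulVec_pow_lt_of_tendsto
    (tendsto_pow_atTop_nhds_zero_of_isRoot_charpoly_norm_lt_one T heig) (v := 1) fun _ => one_pos
  obtain ⟨β, hβ, hTβ⟩ := exists_pos_mulVec_lt_of_mulVec_pow_lt hT zero_le_one hN
  obtain ⟨γ, hγ, hle⟩ := exists_pos_forall_le_one_sub_mul_of_forall_lt hTβ
  exact ⟨γ, hγ, exists_sum_abs_eq_one_of_mulVec_le hβ hle⟩
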